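/- arXiv:1901.05690 — 4 statements merged into one kernel-verified Lean document; each statement's English description precedes it below -/
import Mathlib

section
/- Let X be a finite connected pre-ordered set and R a commutative ring with unity. Then every central-valued derivation of the incidence algebra I(X,R) is zero; that is, if D: I(X,R) → I(X,R) is a derivation with D(f) ∈ Z(I(X,R)) for all f, then D = 0. -/
open IncidenceAlgebra
open scoped Classical

variable {R X : Type*}

/-- The matrix unit `e_{x y}` of the incidence algebra (zero if `¬ x ≤ y`). -/
noncomputable def matrixUnit [CommRing R] [Preorder X] [DecidableEq X] (x y : X) :
    IncidenceAlgebra R X :=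
  ⟨fun u v => if u = x ∧ v = y ∧ x ≤ y then 1 else 0, fun a b hab => by
    try dsimp only
    split_ifs with h
    · exact absurd (by rw [h.1, h.2.1]; exact h.2.2) hab
    · rfl⟩

/-- The Lie bracket `[f,g] = fg - gf`. -/
def lieBr {A : Type*} [Ring A] (f g : A) : A := f * g - g * f

/-- `L` is a Lie triple derivation of the incidence algebra. -/
def IsLieTripleDer [CommRing R] [Preorder X] [DecidableEq X] [LocallyFiniteOrder X]
    (L : IncidenceAlgebra R X →ₗ[R] IncidenceAlgebra R X) : Prop :=
  ∀ f g h : IncidenceAlgebra R X,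
    L (lieBr (lieBr f g) h) =
      lieBr (lieBr (L f) g) h + lieBr (lieBr f (L g)) h + lieBr (lieBr f g) (L h)

/-- `X` is connected: any two points are joined by a chain of comparabilities. -/
def OrdConnected' (X : Type*) [Preorder X] : Prop :=
  ∀ x y : X, Relation.ReflTransGen (fun a b : X => a ≤ b ∨ b ≤ a) x y

/-- `R` is 2-torsion free. -/
def TwoTorsionFree (R : Type*) [CommRing R] : Prop := ∀ r : R, r + r = 0 → r = 0

/-! A central-valued derivation `D` kills every idempotent `e`: `D e = D e * e + e * D e = 2 e D e`,
and multiplying by `e` gives `e D e = 2 e D e`. Hence `e (D f) e = D (e f e)`. An entry `(D f) u v`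
is the only entry of the corner `e_uu (D f) e_vv`. For `u = v` this corner is
`D (f u u • e_uu) = f u u • D e_uu = 0`; for `u ≠ v` centrality turns it into `e_uu e_vv (D f) = 0`. -/

section CentralValuedLeibniz

variable {A : Type*} [Ring A] {D : A → A}

theorem map_eq_zero_of_isIdempotentElem (hder : ∀ f g, D (f * g) = D f * g + f * D g)
    (hcent : ∀ f, D f ∈ Set.center A) {e : A} (he : IsIdempotentElem e) : D e = 0 := by
  have hDe : D e = e * D e + e * D e := by
    conv_lhs => rw [← he.eq, hder, ((hcent e).comm e).eq]
  have hdouble : e * D e = e * D e + e * D e := by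
    conv_lhs => rw [hDe, mul_add, ← mul_assoc, he.eq]
  rw [hDe, left_eq_add.mp hdouble, add_zero]

theorem mul_map_mul_of_isIdempotentElem (hder : ∀ f g, D (f * g) = D f * g + f * D g)
    (hcent : ∀ f, D f ∈ Set.center A) {e : A} (he : IsIdempotentElem e) (f : A) :
    e * D f * e = D (e * f * e) := by
  have hDe := map_eq_zero_of_isIdempotentElem hder hcent he
  rw [hder, hder, hDe]
  simp

end CentralValuedLeibniz

section MatrixUnit

variable [CommRing R] [Preorder X] [DecidableEq X] [LocallyFiniteOrder X]

omit [LocallyFiniteOrder X] in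
theorem matrixUnit_apply (x y u v : X) :
    (matrixUnit x y : IncidenceAlgebra R X) u v = if u = x ∧ v = y ∧ x ≤ y then 1 else 0 := rfl

theorem matrixUnit_self_mul_apply (u : X) (g : IncidenceAlgebra R X) (a b : X) :
    ((matrixUnit u u : IncidenceAlgebra R X) * g) a b = if a = u then g u b else 0 := by
  rw [mul_apply]
  by_cases ha : a = u
  · subst ha
    by_cases hab : a ≤ b
    · simp [matrixUnit_apply, hab]
    · simp [matrixUnit_apply, apply_eq_zero_of_not_le hab]
  · simp [matrixUnit_apply, ha]

theorem mul_matrixUnit_self_apply (v : X) (g : IncidenceAlgebra R X) (a b : X) :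
    (g * (matrixUnit v v : IncidenceAlgebra R X)) a b = if b = v then g a v else 0 := by
  rw [mul_apply]
  by_cases hb : b = v
  · subst hb
    by_cases hab : a ≤ b
    · simp [matrixUnit_apply, hab]
    · simp [matrixUnit_apply, apply_eq_zero_of_not_le hab]
  · simp [matrixUnit_apply, hb]

theorem matrixUnit_mul_mul_matrixUnit_apply (u v : X) (g : IncidenceAlgebra R X) (a b : X) :
    (matrixUnit u u * g * matrixUnit v v : IncidenceAlgebra R X) a b =
      if a = u ∧ b = v then g u v else 0 := by
  rw [mul_matrixUnit_self_apply, matrixUnit_self_mul_apply]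
  by_cases ha : a = u <;> by_cases hb : b = v <;> simp [ha, hb]

theorem matrixUnit_mul_mul_matrixUnit_self (u : X) (g : IncidenceAlgebra R X) :
    matrixUnit u u * g * matrixUnit u u = g u u • matrixUnit u u := by
  ext a b
  rw [matrixUnit_mul_mul_matrixUnit_apply, constSMul_apply, matrixUnit_apply]
  by_cases h : a = u ∧ b = u <;> simp [h]

theorem isIdempotentElem_matrixUnit_self (u : X) :
    IsIdempotentElem (matrixUnit u u : IncidenceAlgebra R X) := by
  have := matrixUnit_mul_mul_matrixUnit_self u (1 : IncidenceAlgebra R X)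
  rwa [mul_one, one_apply, if_pos rfl, one_smul] at this

theorem matrixUnit_self_mul_matrixUnit_self_of_ne {u v : X} (huv : u ≠ v) :
    (matrixUnit u u : IncidenceAlgebra R X) * matrixUnit v v = 0 := by
  ext a b
  rw [matrixUnit_self_mul_apply, matrixUnit_apply]
  simp [huv]

end MatrixUnit

theorem central_derivation_eq_zero_general [CommRing R] [Preorder X] [DecidableEq X]
    [LocallyFiniteOrder X]
    (D : IncidenceAlgebra R X →ₗ[R] IncidenceAlgebra R X)
    (hder : ∀ f g : IncidenceAlgebra R X, D (f * g) = D f * g + f * D g)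
    (hcent : ∀ f : IncidenceAlgebra R X, D f ∈ Set.center (IncidenceAlgebra R X)) :
    D = 0 := by
  ext f u v
  have hcorner : D f u v = (matrixUnit u u * D f * matrixUnit v v : IncidenceAlgebra R X) u v := by
    rw [matrixUnit_mul_mul_matrixUnit_apply, if_pos ⟨rfl, rfl⟩]
  rw [hcorner, LinearMap.zero_apply, IncidenceAlgebra.zero_apply]
  by_cases huv : u = v
  · subst huv
    rw [mul_map_mul_of_isIdempotentElem hder hcent (isIdempotentElem_matrixUnit_self u),
      matrixUnit_mul_mul_matrixUnit_self, map_smul,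
      map_eq_zero_of_isIdempotentElem hder hcent (isIdempotentElem_matrixUnit_self u),
      smul_zero, IncidenceAlgebra.zero_apply]
  · rw [mul_assoc, ((hcent f).comm _).eq, ← mul_assoc,
      matrixUnit_self_mul_matrixUnit_self_of_ne huv, zero_mul, IncidenceAlgebra.zero_apply]

/-- On the incidence algebra of a finite connected pre-ordered set, every
central-valued derivation is zero. -/
theorem central_derivation_eq_zero [CommRing R] [Preorder X] [DecidableEq X] [Fintype X]
    [LocallyFiniteOrder X]
    (hconn : OrdConnected' X)
    (D : IncidenceAlgebra R X →ₗ[R] IncidenceAlgebra R X)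
    (hder : ∀ f g : IncidenceAlgebra R X, D (f * g) = D f * g + f * D g)
    (hcent : ∀ f : IncidenceAlgebra R X, D f ∈ Set.center (IncidenceAlgebra R X)) :
    D = 0 :=
  central_derivation_eq_zero_general D hder hcent
end

section
/- Let X be a finite connected pre-ordered set, R a 2-torsion free commutative ring with unity, and L a Lie triple derivation of I(X,R) with coefficients C^{ij}_{xy}. Then C^{ij}_{ij} + C^{ji}_{ji} = 0 whenever i < j < i (i.e., i ≤ j, j ≤ i, i ≠ j). -/
open IncidenceAlgebra
open scoped Classical

variable {R X : Type*}

/-!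
Apply the triple derivation identity to `[[e_ij, e_ji], e_ij] = 2 e_ij` and read off the
`(i, j)` entry. Since `i ≠ j`, the bracket `[[f, e_ji], e_ij]` has `(i, j)` entry `2 f_ij`,
`[[e_ij, g], e_ij]` has `2 g_ji`, and `[e_ii - e_jj, h]` has `2 h_ij`. Writing
`A = L(e_ij)_ij` and `B = L(e_ji)_ji`, this gives `4A = 2A + 2B + 2A`, i.e. `2(A + B) = 0`.
-/

namespace IncidenceAlgebra

lemma matrixUnit_apply [CommRing R] [Preorder X] [DecidableEq X] (x y u v : X) :
    (matrixUnit x y : IncidenceAlgebra R X) u v = if u = x ∧ v = y ∧ x ≤ y then 1 else 0 :=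
  rfl

variable [CommRing R] [Preorder X] [DecidableEq X] [LocallyFiniteOrder X]

lemma matrixUnit_mul_apply {a b : X} (hab : a ≤ b) (f : IncidenceAlgebra R X) (u v : X) :
    (matrixUnit a b * f : IncidenceAlgebra R X) u v = if u = a then f b v else 0 := by
  split_ifs with hu
  · subst hu
    by_cases hbv : b ≤ v
    · simp [matrixUnit_apply, hab, hbv]
    · simp [matrixUnit_apply, hab, hbv, apply_eq_zero_of_not_le hbv]
  · simp [matrixUnit_apply, hu]

lemma mul_matrixUnit_apply {c d : X} (hcd : c ≤ d) (f : IncidenceAlgebra R X) (u v : X) :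
    (f * matrixUnit c d : IncidenceAlgebra R X) u v = if v = d then f u c else 0 := by
  split_ifs with hv
  · subst hv
    by_cases huc : u ≤ c
    · simp [matrixUnit_apply, hcd, huc]
    · simp [matrixUnit_apply, hcd, huc, apply_eq_zero_of_not_le huc]
  · simp [matrixUnit_apply, hv]

lemma matrixUnit_mul_matrixUnit {a b c d : X} (hab : a ≤ b) (hcd : c ≤ d) :
    (matrixUnit a b * matrixUnit c d : IncidenceAlgebra R X) =
      if b = c then matrixUnit a d else 0 := by
  ext u v
  rw [matrixUnit_mul_apply hab]
  split_ifs with hbc hu hu <;> simp_all [matrixUnit_apply, le_trans hab]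

variable {i j : X}

lemma lieBr_matrixUnit_matrixUnit (hij : i ≤ j) (hji : j ≤ i) :
    lieBr (matrixUnit i j) (matrixUnit j i : IncidenceAlgebra R X) =
      matrixUnit i i - matrixUnit j j := by
  simp [lieBr, matrixUnit_mul_matrixUnit hij hji, matrixUnit_mul_matrixUnit hji hij]

lemma lieBr_lieBr_matrixUnit_matrixUnit (hij : i ≤ j) (hji : j ≤ i) (hne : i ≠ j) :
    lieBr (lieBr (matrixUnit i j) (matrixUnit j i)) (matrixUnit i j : IncidenceAlgebra R X) =
      matrixUnit i j + matrixUnit i j := by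
  rw [lieBr_matrixUnit_matrixUnit hij hji]
  simp [lieBr, sub_mul, mul_sub, matrixUnit_mul_matrixUnit le_rfl hij,
    matrixUnit_mul_matrixUnit hij le_rfl, hne.symm]

lemma lieBr_lieBr_matrixUnit_apply_left (hij : i ≤ j) (hji : j ≤ i) (hne : i ≠ j)
    (f : IncidenceAlgebra R X) :
    lieBr (lieBr f (matrixUnit j i)) (matrixUnit i j) i j = f i j + f i j := by
  simp only [lieBr, sub_apply, matrixUnit_mul_apply hij, mul_matrixUnit_apply hij,
    matrixUnit_mul_apply hji, mul_matrixUnit_apply hji]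
  simp [hne, hne.symm]

lemma lieBr_lieBr_matrixUnit_apply_middle (hij : i ≤ j) (hne : i ≠ j)
    (g : IncidenceAlgebra R X) :
    lieBr (lieBr (matrixUnit i j) g) (matrixUnit i j) i j = g j i + g j i := by
  simp only [lieBr, sub_apply, matrixUnit_mul_apply hij, mul_matrixUnit_apply hij]
  simp [hne, hne.symm]

lemma lieBr_sub_matrixUnit_apply (hne : i ≠ j) (h : IncidenceAlgebra R X) :
    lieBr (matrixUnit i i - matrixUnit j j) h i j = h i j + h i j := by
  simp only [lieBr, sub_mul, mul_sub, sub_apply, matrixUnit_mul_apply le_rfl,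
    mul_matrixUnit_apply le_rfl]
  simp [hne, hne.symm]

end IncidenceAlgebra

theorem lieTripleDer_rel_R3_general [CommRing R] [Preorder X] [DecidableEq X]
    [LocallyFiniteOrder X]
    (htf : TwoTorsionFree R)
    (L : IncidenceAlgebra R X →ₗ[R] IncidenceAlgebra R X) (hL : IsLieTripleDer L) :
    ∀ i j : X, i ≤ j → j ≤ i → i ≠ j →
      L (matrixUnit i j) i j + L (matrixUnit j i) j i = 0 := by
  intro i j hij hji hne
  have key := congrArg (fun f : IncidenceAlgebra R X => f i j)
    (hL (matrixUnit i j) (matrixUnit j i) (matrixUnit i j))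
  rw [lieBr_lieBr_matrixUnit_matrixUnit hij hji hne, lieBr_matrixUnit_matrixUnit hij hji] at key
  simp only [map_add, IncidenceAlgebra.add_apply, lieBr_lieBr_matrixUnit_apply_left hij hji hne,
    lieBr_lieBr_matrixUnit_apply_middle hij hne, lieBr_sub_matrixUnit_apply hne] at key
  exact htf _ (by linear_combination -key)

/-- relation (R3). `C^{ij}_{ij} + C^{ji}_{ji} = 0` for `i < j < i`. -/
theorem lieTripleDer_rel_R3 [CommRing R] [Preorder X] [DecidableEq X]
    [Fintype X] [LocallyFiniteOrder X]
    (htf : TwoTorsionFree R) (hconn : OrdConnected' X)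
    (L : IncidenceAlgebra R X →ₗ[R] IncidenceAlgebra R X) (hL : IsLieTripleDer L) :
    ∀ i j : X, i ≤ j → j ≤ i → i ≠ j →
      L (matrixUnit i j) i j + L (matrixUnit j i) j i = 0 :=
  lieTripleDer_rel_R3_general htf L hL
end

section
/- Let X be a locally finite pre-ordered set, R a commutative ring with unity, and L a Lie triple derivation of I(X,R). Then for all f ∈ I(X,R) and all x < y, L(f)(x,y) = L(f|_x^y)(x,y). -/
open IncidenceAlgebra
open scoped Classical

variable {R X : Type*}

/-- The restriction `f|_x^y` of `f` to the interval `[x, y]`. -/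
noncomputable def restrict [CommRing R] [Preorder X] (x y : X)
    (f : IncidenceAlgebra R X) : IncidenceAlgebra R X :=
  ⟨fun u v => if x ≤ u ∧ v ≤ y then f u v else 0, fun a b hab => by
    split_ifs with h
    · exact IncidenceAlgebra.apply_eq_zero_of_not_le hab f
    · rfl⟩

@[simp] lemma restrict_apply [CommRing R] [Preorder X] (x y : X)
    (f : IncidenceAlgebra R X) (u v : X) :
    restrict x y f u v = if x ≤ u ∧ v ≤ y then f u v else 0 := rfl

/-!
The difference `g = f - f|_x^y` vanishes on `[x, y]`, and then `[[e_x, g], e_y] = 0`, where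
`e_a = diagSingle a` is the diagonal idempotent at `a`. Applying `L` and evaluating at `(x, y)`,
the terms `[[L e_x, g], e_y]` and `[[e_x, g], L e_y]` vanish there, because `g` and `[e_x, g]`
vanish on `[x, y]` and a bracket with anything vanishing on `[x, y]` vanishes at `(x, y)`. What
is left is `[[e_x, L g], e_y] (x, y) = L g (x, y)`, so `L g (x, y) = 0`.
-/

namespace IncidenceAlgebra

section DiagSingle

variable [Preorder X] [DecidableEq X]

noncomputable def diagSingle [Zero R] [One R] (a : X) : IncidenceAlgebra R X :=
  ⟨fun u v => if u = a ∧ v = a then 1 else 0, fun u v huv => by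
    rw [if_neg]
    rintro ⟨rfl, rfl⟩
    exact huv le_rfl⟩

@[simp] lemma diagSingle_apply [Zero R] [One R] (a u v : X) :
    (diagSingle a : IncidenceAlgebra R X) u v = if u = a ∧ v = a then 1 else 0 := rfl

variable [LocallyFiniteOrder X]

lemma diagSingle_mul_apply [NonAssocSemiring R] (a : X) (f : IncidenceAlgebra R X) (u v : X) :
    ((diagSingle a : IncidenceAlgebra R X) * f) u v = if u = a then f a v else 0 := by
  split_ifs with hu
  · subst hu
    by_cases huv : u ≤ v
    · rw [mul_apply, Finset.sum_eq_single_of_mem u (Finset.left_mem_Icc.2 huv)]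
      · simp
      · intro w _ hw
        simp [hw]
    · rw [apply_eq_zero_of_not_le huv, apply_eq_zero_of_not_le huv]
  · exact Finset.sum_eq_zero fun w _ => by simp [hu]

lemma mul_diagSingle_apply [NonAssocSemiring R] (a : X) (f : IncidenceAlgebra R X) (u v : X) :
    (f * (diagSingle a : IncidenceAlgebra R X)) u v = if v = a then f u a else 0 := by
  split_ifs with hv
  · subst hv
    by_cases huv : u ≤ v
    · rw [mul_apply, Finset.sum_eq_single_of_mem v (Finset.right_mem_Icc.2 huv)]
      · simp
      · intro w _ hw
        simp [hw]
    · rw [apply_eq_zero_of_not_le huv, apply_eq_zero_of_not_le huv]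
  · exact Finset.sum_eq_zero fun w _ => by simp [hv]

variable [Ring R]

lemma lieBr_diagSingle_apply (a : X) (f : IncidenceAlgebra R X) (u v : X) :
    lieBr (diagSingle a) f u v = (if u = a then f a v else 0) - (if v = a then f u a else 0) := by
  rw [lieBr, sub_apply, diagSingle_mul_apply, mul_diagSingle_apply]

lemma lieBr_diagSingle_right_apply (a : X) (f : IncidenceAlgebra R X) (u v : X) :
    lieBr f (diagSingle a) u v = (if v = a then f u a else 0) - (if u = a then f a v else 0) := by
  rw [lieBr, sub_apply, diagSingle_mul_apply, mul_diagSingle_apply]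

lemma lieBr_diagSingle_apply_of_ne {x y : X} (hne : x ≠ y) (f : IncidenceAlgebra R X) :
    lieBr (diagSingle x) f x y = f x y := by
  rw [lieBr_diagSingle_apply, if_pos rfl, if_neg hne.symm, sub_zero]

lemma lieBr_diagSingle_right_apply_of_ne {x y : X} (hne : x ≠ y) (f : IncidenceAlgebra R X) :
    lieBr f (diagSingle y) x y = f x y := by
  rw [lieBr_diagSingle_right_apply, if_pos rfl, if_neg hne, sub_zero]

end DiagSingle

section Restrict

variable [CommRing R] [Preorder X] {x y : X} {g : IncidenceAlgebra R X}

lemma restrict_sub_restrict (f : IncidenceAlgebra R X) :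
    restrict x y (f - restrict x y f) = 0 := by
  ext u v _
  by_cases h : x ≤ u ∧ v ≤ y <;> simp [h]

lemma apply_eq_zero_of_restrict_eq_zero (hg : restrict x y g = 0) {u v : X} (hu : x ≤ u)
    (hv : v ≤ y) : g u v = 0 := by
  simpa [hu, hv] using congr($hg u v)

variable [LocallyFiniteOrder X]

lemma mul_apply_eq_zero_of_restrict_left (hg : restrict x y g = 0) (k : IncidenceAlgebra R X) :
    (g * k) x y = 0 :=
  Finset.sum_eq_zero fun w hw => by
    rw [apply_eq_zero_of_restrict_eq_zero hg le_rfl (Finset.mem_Icc.1 hw).2, zero_mul]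

lemma mul_apply_eq_zero_of_restrict_right (hg : restrict x y g = 0) (k : IncidenceAlgebra R X) :
    (k * g) x y = 0 :=
  Finset.sum_eq_zero fun w hw => by
    rw [apply_eq_zero_of_restrict_eq_zero hg (Finset.mem_Icc.1 hw).1 le_rfl, mul_zero]

variable [DecidableEq X]

lemma lieBr_apply_eq_zero_of_restrict_left (hg : restrict x y g = 0) (k : IncidenceAlgebra R X) :
    lieBr g k x y = 0 := by
  rw [lieBr, sub_apply, mul_apply_eq_zero_of_restrict_left hg,
    mul_apply_eq_zero_of_restrict_right hg, sub_zero]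

lemma lieBr_apply_eq_zero_of_restrict_right (hg : restrict x y g = 0) (k : IncidenceAlgebra R X) :
    lieBr k g x y = 0 := by
  rw [lieBr, sub_apply, mul_apply_eq_zero_of_restrict_left hg,
    mul_apply_eq_zero_of_restrict_right hg, sub_zero]

lemma restrict_lieBr_diagSingle_eq_zero (hg : restrict x y g = 0) :
    restrict x y (lieBr (diagSingle x) g) = 0 := by
  ext u v _
  rw [restrict_apply, lieBr_diagSingle_apply, zero_apply]
  by_cases h : x ≤ u ∧ v ≤ y
  · have hxv : g x v = 0 := apply_eq_zero_of_restrict_eq_zero hg le_rfl h.2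
    have hux : v = x → g u x = 0 := fun hv ↦
      apply_eq_zero_of_restrict_eq_zero hg h.1 (hv ▸ h.2)
    simp +contextual [h, hxv, hux]
  · rw [if_neg h]

lemma lieBr_lieBr_diagSingle_diagSingle_eq_zero (hg : restrict x y g = 0) (hxy : x ≤ y)
    (hne : x ≠ y) : lieBr (lieBr (diagSingle x) g) (diagSingle y) = 0 := by
  ext u v _
  simp [lieBr_diagSingle_right_apply, lieBr_diagSingle_apply, hne.symm,
    apply_eq_zero_of_restrict_eq_zero hg le_rfl le_rfl,
    apply_eq_zero_of_restrict_eq_zero hg hxy hxy]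

end Restrict

end IncidenceAlgebra

lemma IsLieTripleDer.apply_eq_zero_of_restrict_eq_zero [CommRing R] [Preorder X] [DecidableEq X]
    [LocallyFiniteOrder X] {L : IncidenceAlgebra R X →ₗ[R] IncidenceAlgebra R X}
    (hL : IsLieTripleDer L) {g : IncidenceAlgebra R X} {x y : X} (hg : restrict x y g = 0)
    (hxy : x ≤ y) (hne : x ≠ y) : L g x y = 0 := by
  have h := congr($(hL (diagSingle x) g (diagSingle y)) x y)
  rw [lieBr_lieBr_diagSingle_diagSingle_eq_zero hg hxy hne, map_zero] at h
  simpa [lieBr_diagSingle_right_apply_of_ne hne, lieBr_diagSingle_apply_of_ne hne,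
    lieBr_apply_eq_zero_of_restrict_right hg,
    lieBr_apply_eq_zero_of_restrict_left (restrict_lieBr_diagSingle_eq_zero hg)] using h.symm

/-- For a Lie triple derivation `L` and `x < y`,
`L(f)(x,y) = L(f|_x^y)(x,y)`. -/
theorem lieTripleDer_apply_restrict [CommRing R] [Preorder X] [DecidableEq X]
    [LocallyFiniteOrder X]
    (L : IncidenceAlgebra R X →ₗ[R] IncidenceAlgebra R X) (hL : IsLieTripleDer L) :
    ∀ (f : IncidenceAlgebra R X) (x y : X), x ≤ y → x ≠ y →
      L f x y = L (restrict x y f) x y := by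
  intro f x y hxy hne
  rw [← sub_eq_zero, ← IncidenceAlgebra.sub_apply, ← map_sub]
  exact hL.apply_eq_zero_of_restrict_eq_zero (restrict_sub_restrict f) hxy hne
end

section
/- Let X be a locally finite pre-ordered set, R a commutative ring with unity, and D a derivation of I(X,R). Then for all f ∈ I(X,R) and all x ≤ y (including x = y), D(f)(x,y) = D(f|_x^y)(x,y). -/
open IncidenceAlgebra
open scoped Classical

variable {R X : Type*}

namespace IncidenceAlgebra

section Semiring

variable [Semiring R] [Preorder X]

section DecidableEq

variable [DecidableEq X]

/-- The diagonal idempotent `e_{xx}` of the incidence algebra. -/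
def singleDiag (x : X) : IncidenceAlgebra R X :=
  ⟨fun u v => if u = x ∧ v = x then 1 else 0, fun u v huv => by
    rw [if_neg]
    rintro ⟨rfl, rfl⟩
    exact huv le_rfl⟩

@[simp] lemma singleDiag_apply (x u v : X) :
    (singleDiag x : IncidenceAlgebra R X) u v = if u = x ∧ v = x then 1 else 0 := rfl

end DecidableEq

variable [LocallyFiniteOrder X]

lemma mul_apply_eq_zero_of_right {f g : IncidenceAlgebra R X} {a c : X}
    (hg : ∀ b, a ≤ b → b ≤ c → g b c = 0) : (f * g) a c = 0 := by
  rw [mul_apply]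
  refine Finset.sum_eq_zero fun b hb => ?_
  obtain ⟨hab, hbc⟩ := Finset.mem_Icc.1 hb
  rw [hg b hab hbc, mul_zero]

lemma mul_apply_eq_zero_of_left {f g : IncidenceAlgebra R X} {a c : X}
    (hf : ∀ b, a ≤ b → b ≤ c → f a b = 0) : (f * g) a c = 0 := by
  rw [mul_apply]
  refine Finset.sum_eq_zero fun b hb => ?_
  obtain ⟨hab, hbc⟩ := Finset.mem_Icc.1 hb
  rw [hf b hab hbc, zero_mul]

variable [DecidableEq X]

lemma singleDiag_mul_apply (x : X) (g : IncidenceAlgebra R X) (u v : X) :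
    (singleDiag x * g : IncidenceAlgebra R X) u v = if u = x then g u v else 0 := by
  split_ifs with hu
  · subst hu
    by_cases huv : u ≤ v
    · rw [mul_apply, Finset.sum_eq_single_of_mem u (Finset.mem_Icc.2 ⟨le_rfl, huv⟩)]
      · simp
      · intro b _ hb
        simp [hb]
    · rw [apply_eq_zero_of_not_le huv, apply_eq_zero_of_not_le huv]
  · exact mul_apply_eq_zero_of_left fun b _ _ => if_neg fun h => hu h.1

lemma mul_singleDiag_apply (y : X) (g : IncidenceAlgebra R X) (u v : X) :
    (g * singleDiag y : IncidenceAlgebra R X) u v = if v = y then g u v else 0 := by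
  split_ifs with hv
  · subst hv
    by_cases huv : u ≤ v
    · rw [mul_apply, Finset.sum_eq_single_of_mem v (Finset.mem_Icc.2 ⟨huv, le_rfl⟩)]
      · simp
      · intro b _ hb
        simp [hb]
    · rw [apply_eq_zero_of_not_le huv, apply_eq_zero_of_not_le huv]
  · exact mul_apply_eq_zero_of_right fun b _ _ => if_neg fun h => hv h.2

lemma singleDiag_mul_mul_singleDiag_apply (x y : X) (g : IncidenceAlgebra R X) :
    (singleDiag x * g * singleDiag y : IncidenceAlgebra R X) x y = g x y := by
  rw [mul_singleDiag_apply, if_pos rfl, singleDiag_mul_apply, if_pos rfl]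

lemma singleDiag_mul_mul_singleDiag_eq_zero {x y : X} {g : IncidenceAlgebra R X}
    (hg : g x y = 0) : (singleDiag x * g * singleDiag y : IncidenceAlgebra R X) = 0 := by
  ext u v _
  rw [mul_singleDiag_apply, singleDiag_mul_apply, IncidenceAlgebra.zero_apply]
  split_ifs with hv hu
  · rw [hu, hv, hg]
  all_goals rfl

end Semiring

end IncidenceAlgebra

lemma leibniz_mul_mul {A : Type*} [Ring A] {D : A → A}
    (hder : ∀ f g : A, D (f * g) = D f * g + f * D g) (a g b : A) :
    D (a * g * b) = D a * g * b + a * D g * b + a * g * D b := by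
  rw [hder, hder]
  noncomm_ring

/-- Apply the Leibniz rule to `e_x g e_y = 0`: evaluated at `(x, y)`, the outer two terms only see
`g` on `[x, y]`, and the middle one is `D g x y`. -/
lemma derivation_apply_eq_zero_of_vanishing [Ring R] [Preorder X] [DecidableEq X]
    [LocallyFiniteOrder X] {D : IncidenceAlgebra R X → IncidenceAlgebra R X}
    (hder : ∀ f g : IncidenceAlgebra R X, D (f * g) = D f * g + f * D g) {x y : X}
    {g : IncidenceAlgebra R X} (hg : ∀ u v, x ≤ u → v ≤ y → g u v = 0) : D g x y = 0 := by
  have hD0 : D 0 = 0 := by simpa using hder 0 0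
  have hcorner : singleDiag x * g * singleDiag y = 0 :=
    singleDiag_mul_mul_singleDiag_eq_zero (hg x y le_rfl le_rfl)
  have hleft : (D (singleDiag x) * g * singleDiag y : IncidenceAlgebra R X) x y = 0 := by
    rw [mul_singleDiag_apply, if_pos rfl]
    exact mul_apply_eq_zero_of_right fun b hxb _ => hg b y hxb le_rfl
  have hright : (singleDiag x * g * D (singleDiag y) : IncidenceAlgebra R X) x y = 0 :=
    mul_apply_eq_zero_of_left fun b _ hby => by
      rw [singleDiag_mul_apply, if_pos rfl, hg x b le_rfl hby]
  have hexpand := congrArg (· x y) (leibniz_mul_mul hder (singleDiag x) g (singleDiag y))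
  simp only [hcorner, hD0, IncidenceAlgebra.add_apply, hleft, hright,
    singleDiag_mul_mul_singleDiag_apply, zero_add, add_zero] at hexpand
  exact hexpand.symm

lemma restrict_apply_of_le [CommRing R] [Preorder X] {x y u v : X} (f : IncidenceAlgebra R X)
    (hu : x ≤ u) (hv : v ≤ y) : restrict x y f u v = f u v :=
  if_pos ⟨hu, hv⟩

/-- For a derivation `D` and any `x ≤ y` (including `x = y`),
`D(f)(x,y) = D(f|_x^y)(x,y)`. -/
theorem derivation_apply_restrict [CommRing R] [Preorder X] [DecidableEq X]
    [LocallyFiniteOrder X]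
    (D : IncidenceAlgebra R X →ₗ[R] IncidenceAlgebra R X)
    (hder : ∀ f g : IncidenceAlgebra R X, D (f * g) = D f * g + f * D g) :
    ∀ (f : IncidenceAlgebra R X) (x y : X), x ≤ y →
      D f x y = D (restrict x y f) x y := by
  intro f x y _
  have hvanish : ∀ u v, x ≤ u → v ≤ y → (f - restrict x y f) u v = 0 := fun u v hu hv => by
    rw [IncidenceAlgebra.sub_apply, restrict_apply_of_le f hu hv, sub_self]
  have hzero := derivation_apply_eq_zero_of_vanishing hder hvanish
  rwa [map_sub, IncidenceAlgebra.sub_apply, sub_eq_zero] at hzero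
end
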